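/- Let a be a finite tuple in a saturated model U of DCF_{0,m} over a Π-field K, let L ≥ K be a Π-field extension with a independent from L over K (in the sense of forking in DCF_{0,m}), and let Δ be a set of linearly independent elements of the K^Π-span of Π. Then the Π-field L⟨a⟩_Π is finitely Δ-generated over L if and only if K⟨a⟩_Π is finitely Δ-generated over K. -/

import Mathlib

/-- Multi-indices of derivative operators (the monoid Θ). -/
abbrev Theta (ι : Type*) := ι →₀ ℕ

/-- Apply a multi-index `θ` of operators from the family `δ` to `a`. -/
noncomputable def thetaApply {A ι : Type*} (δ : ι → A → A) (θ : Theta ι) (a : A) : A :=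
  ((θ.support.toList.map fun j => (δ j)^[θ j]).foldr (· ∘ ·) id) a

/-- A family of commuting derivations on a commutative ring. -/
def IsCommDiff {A : Type*} [CommRing A] {ι : Type*} (δA : ι → A → A) : Prop :=
  (∀ j x y, δA j (x + y) = δA j x + δA j y)
  ∧ (∀ j x y, δA j (x * y) = x * δA j y + δA j x * y)
  ∧ (∀ i j x, δA i (δA j x) = δA j (δA i x))

/-- A subfield stable under a family of derivations (a differential subfield). -/
def DStable {U ι : Type*} [Field U] (δ : ι → U → U) (F : Subfield U) : Prop :=
  ∀ j, ∀ x ∈ F, δ j x ∈ F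

/-- The differential field `F⟨a⟩` generated by a tuple `a` over a subfield `F`,
w.r.t. the family of derivations `δ`: the subfield generated by `F` together with
all derivatives `θ a_k`. -/
noncomputable def dAdjoin {U ι : Type*} [Field U] (δ : ι → U → U)
    (F : Subfield U) {n : ℕ} (a : Fin n → U) : Subfield U :=
  Subfield.closure (↑F ∪ {x | ∃ (k : Fin n) (θ : Theta ι), x = thetaApply δ θ (a k)})

/-- `F⟨a⟩_Π` is finitely generated as a `Δ`-field extension of `F`
("Δ bounds the Π-type of `a` over `F`"). -/
def FinitelyDGen {U ι : Type*} [Field U] (dPi : ι → U → U) {t : ℕ}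
    (dDe : Fin t → U → U) (F : Subfield U) {n : ℕ} (a : Fin n → U) : Prop :=
  ∃ (s : ℕ) (α : Fin s → U), (∀ k, α k ∈ dAdjoin dPi F a)
    ∧ dAdjoin dPi F a = dAdjoin dDe F α

/-!
Suppose `L⟨a⟩_Π = L⟨α⟩_Δ`. The finitely many `α k` only involve Π-derivatives of `a` of some
order `≤ r`, so `L⟨a⟩_Π` is generated over `L` by the Δ-words `W` in these derivatives. Every
Π-derivative `x` of `a` is thus algebraic over `L(W)`, and independence lets us replace `L` by
`K`: a transcendence basis `B ⊆ W` over `K` stays independent over `L`, so `x` transcendental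
over `K(B)` would be transcendental over `L(B)`. Hence all Π-derivatives of `a` are algebraic
over `E_r = K⟨derivatives of order ≤ r⟩_Δ`. In characteristic zero, differentiating a
minimal polynomial shows that each `δ i` maps the derivatives of order `≤ r + 1` into
`E_{r+1}`; so `E_{r+1}` is Π-stable, hence equals `K⟨a⟩_Π`, and it is Δ-generated by finitely
many elements. The converse is base change along `K ≤ L`.
-/

open Polynomial

section ThetaApply

variable {A ι : Type*} {δ : ι → A → A}

@[simp]
theorem thetaApply_zero (x : A) : thetaApply δ 0 x = x := by
  simp [thetaApply]

theorem thetaApply_single_one (j : ι) (x : A) :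
    thetaApply δ (Finsupp.single j 1) x = δ j x := by
  simp [thetaApply]

open scoped IsMulCommutative in
theorem thetaApply_add (hcomm : ∀ i j x, δ i (δ j x) = δ j (δ i x)) (θ θ' : Theta ι) (x : A) :
    thetaApply δ (θ + θ') x = thetaApply δ θ (thetaApply δ θ' x) := by
  classical
  -- In the commutative monoid generated by the `δ j`, `thetaApply δ θ` is `∏ j, δ j ^ θ j`.
  let M := Submonoid.closure (Set.range δ : Set (Function.End A))
  have : IsMulCommutative M := Submonoid.isMulCommutative_closure _ <| by
    rintro _ ⟨i, rfl⟩ _ ⟨j, rfl⟩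
    funext x
    exact hcomm i j x
  let e : ι → M := fun j => ⟨δ j, Submonoid.subset_closure ⟨j, rfl⟩⟩
  have hprod : ∀ θ : Theta ι,
      thetaApply δ θ = ((θ.prod fun j k => e j ^ k : M) : Function.End A) := by
    intro θ
    rw [Finsupp.prod, ← Finset.prod_map_toList, ← M.coe_subtype, map_list_prod, List.map_map]
    rfl
  rw [hprod, hprod, hprod, Finsupp.prod_add_index' (by simp) fun _ _ _ => pow_add _ _ _]
  rfl

theorem thetaApply_mapsTo {S : Set A} (hS : ∀ j, Set.MapsTo (δ j) S S) (θ : Theta ι) :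
    Set.MapsTo (thetaApply δ θ) S S := by
  suffices ∀ l : List ι,
      Set.MapsTo ((l.map fun j => (δ j)^[θ j]).foldr (· ∘ ·) id) S S from this _
  intro l
  induction l with
  | nil => exact Set.mapsTo_id S
  | cons j l ih => exact ((hS j).iterate (θ j)).comp ih

theorem thetaApply_commute {g : A → A} (hg : ∀ j, Function.Commute g (δ j)) (θ : Theta ι) :
    Function.Commute g (thetaApply δ θ) := by
  suffices ∀ l : List ι,
      Function.Commute g ((l.map fun j => (δ j)^[θ j]).foldr (· ∘ ·) id) from this _
  intro l
  induction l with
  | nil => exact fun _ => rfl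
  | cons j l ih => exact ((hg j).iterate_right (θ j)).comp_right ih

end ThetaApply

section CommDiff

variable {A ι : Type*} [CommRing A] {δ : ι → A → A}

def IsCommDiff.derivation (hδ : IsCommDiff δ) (j : ι) : Derivation ℤ A A :=
  Derivation.mk' (AddMonoidHom.mk' (δ j) (hδ.1 j)).toIntLinearMap fun x y => by
    simp [hδ.2.1, mul_comm]

@[simp]
theorem IsCommDiff.coe_derivation (hδ : IsCommDiff δ) (j : ι) : ⇑(hδ.derivation j) = δ j :=
  rfl

variable [Fintype ι] {κ : Type*} {c : κ → ι → A} {dDe : κ → A → A}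

theorem IsCommDiff.commute_combination (hδ : IsCommDiff δ) (hc : ∀ j i i', δ i' (c j i) = 0)
    (hΔdef : ∀ j x, dDe j x = ∑ i, c j i * δ i x) (i : ι) (j : κ) (x : A) :
    δ i (dDe j x) = dDe j (δ i x) := by
  rw [hΔdef, hΔdef]
  refine (map_sum (hδ.derivation i) _ _).trans (Finset.sum_congr rfl fun k _ => ?_)
  rw [coe_derivation, hδ.2.1, hc, zero_mul, add_zero, hδ.2.2]

theorem IsCommDiff.combination (hδ : IsCommDiff δ) (hc : ∀ j i i', δ i' (c j i) = 0)
    (hΔdef : ∀ j x, dDe j x = ∑ i, c j i * δ i x) : IsCommDiff dDe := by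
  refine ⟨fun j x y => ?_, fun j x y => ?_, fun j j' x => ?_⟩
  · simp only [hΔdef, hδ.1, mul_add, Finset.sum_add_distrib]
  · simp only [hΔdef, hδ.2.1, Finset.mul_sum, Finset.sum_mul, ← Finset.sum_add_distrib]
    exact Finset.sum_congr rfl fun i _ => by ring
  · rw [hΔdef j (dDe j' x), hΔdef j' (dDe j x)]
    simp_rw [hδ.commute_combination hc hΔdef, hΔdef, Finset.mul_sum]
    rw [Finset.sum_comm]
    refine Finset.sum_congr rfl fun l _ => Finset.sum_congr rfl fun k _ => ?_
    rw [hδ.2.2]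
    ring

end CommDiff

section Algebraic

variable {U : Type*} [Field U]

theorem AlgebraicIndepOn.of_forall_fin {R S A : Type*} [CommRing R] [CommRing S] [CommRing A]
    [Algebra R A] [Algebra S A] {P : Set A}
    (h : ∀ (d : ℕ) (x : Fin d → A), (∀ k, x k ∈ P) →
      AlgebraicIndependent R x → AlgebraicIndependent S x)
    {s : Set A} (hs : s ⊆ P) (hR : AlgebraicIndepOn R id s) : AlgebraicIndepOn S id s := by
  refine algebraicIndependent_of_finite s fun t hts ht => ?_
  have := ht.to_subtype
  let e := (Finite.equivFin t).symm
  refine (algebraicIndependent_equiv e).mp (h _ _ (fun k => hs (hts (e k).2)) ?_)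
  exact (algebraicIndependent_equiv e).mpr (hR.mono hts)

theorem isAlgebraic_of_coe_subset {R : Type*} [CommRing R] [Algebra R U] {S : Type*}
    [SetLike S U] [SubringClass S U] {A : Subalgebra R U} {B : S} (hAB : (A : Set U) ⊆ B) {x : U}
    (hx : IsAlgebraic A x) : IsAlgebraic B x :=
  hx.ringHom_of_comp_eq ((algebraMap A U).codRestrict B fun y => hAB y.2) (RingHom.id U)
    (fun _ _ h => Subtype.ext (congrArg Subtype.val h :)) rfl

theorem Subfield.range_algebraMap (K : Subfield U) : Set.range (algebraMap K U) = K :=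
  Subtype.range_coe

theorem Subfield.coe_adjoin_subset_closure (K : Subfield U) (S : Set U) :
    (Algebra.adjoin K S : Set U) ⊆ Subfield.closure (K ∪ S) := by
  rw [← Subalgebra.coe_toSubring, Algebra.adjoin_eq_ring_closure, K.range_algebraMap]
  exact Subfield.subring_closure_le _

theorem Subfield.coe_adjoin_subset_adjoin {K L : Subfield U} (hKL : K ≤ L) (S : Set U) :
    (Algebra.adjoin K S : Set U) ⊆ Algebra.adjoin L S := by
  rw [← Subalgebra.coe_toSubring, ← Subalgebra.coe_toSubring, Algebra.adjoin_eq_ring_closure,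
    Algebra.adjoin_eq_ring_closure, K.range_algebraMap, L.range_algebraMap]
  exact Subring.closure_mono (Set.union_subset_union_left _ hKL)

theorem Subfield.isAlgebraic_adjoin_of_mem_closure (K : Subfield U) {S : Set U} {x : U}
    (hx : x ∈ Subfield.closure (K ∪ S)) : IsAlgebraic (Algebra.adjoin K S) x := by
  rw [← K.range_algebraMap, ← IntermediateField.adjoin_toSubfield] at hx
  exact IntermediateField.isAlgebraic_adjoin_iff.mp
    (isAlgebraic_algebraMap (⟨x, hx⟩ : IntermediateField.adjoin K S))

open AlgebraicIndependent in
theorem isAlgebraic_adjoin_of_algebraicIndepOn_imp {K L : Subfield U} (hKL : K ≤ L)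
    {P S : Set U} (hP : ∀ s ⊆ P, AlgebraicIndepOn K id s → AlgebraicIndepOn L id s)
    (hS : S ⊆ P) {x : U} (hx : x ∈ P) (hxL : IsAlgebraic (Algebra.adjoin L S) x) :
    IsAlgebraic (Algebra.adjoin K S) x := by
  obtain ⟨B, hB⟩ := (matroid K U).exists_isBasis S
  obtain ⟨hBind, hBS, hSB⟩ := matroid_isBasis_iff.mp hB
  rw [← isAlgebraic_adjoin_iff_of_matroid_isBasis hB]
  by_contra hxK
  have hxB : x ∉ B := fun h =>
    hxK (isAlgebraic_algebraMap (⟨x, Algebra.subset_adjoin h⟩ : Algebra.adjoin K B))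
  have hind : AlgebraicIndepOn K id (insert x B) := hBind.insert (by rwa [Set.image_id])
  have htr := ((AlgebraicIndepOn.insert_iff hxB).mp
    (hP _ (Set.insert_subset hx (hBS.trans hS)) hind)).2
  rw [Set.image_id] at htr
  exact htr (hxL.adjoin_of_forall_isAlgebraic fun y hy =>
    isAlgebraic_of_coe_subset (Subfield.coe_adjoin_subset_adjoin hKL B) (hSB y hy.1))

theorem isAlgebraic_closure_of_algebraicIndepOn_imp {K L : Subfield U} (hKL : K ≤ L)
    {P S : Set U} (hP : ∀ s ⊆ P, AlgebraicIndepOn K id s → AlgebraicIndepOn L id s)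
    (hS : S ⊆ P) {x : U} (hx : x ∈ P) (hxL : x ∈ Subfield.closure (L ∪ S)) :
    IsAlgebraic (Subfield.closure (K ∪ S)) x :=
  isAlgebraic_of_coe_subset (K.coe_adjoin_subset_closure S)
    (isAlgebraic_adjoin_of_algebraicIndepOn_imp hKL hP hS hx
      (L.isAlgebraic_adjoin_of_mem_closure hxL))

end Algebraic

section Derivation

variable {R U : Type*} [CommRing R] [Field U] [Algebra R U]

theorem Derivation.mapsTo_closure (D : Derivation R U U) {X : Set U} {E : Subfield U}
    (hX : X ⊆ E) (hD : Set.MapsTo D X E) : Set.MapsTo D (Subfield.closure X) E := by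
  intro x hx
  suffices x ∈ E ∧ D x ∈ E from this.2
  induction hx using Subfield.closure_induction with
  | mem x hx => exact ⟨hX hx, hD hx⟩
  | one => exact ⟨E.one_mem, by simp⟩
  | add x y _ _ hx hy => exact ⟨E.add_mem hx.1 hy.1, by simpa using E.add_mem hx.2 hy.2⟩
  | neg x _ hx => exact ⟨E.neg_mem hx.1, by simpa using E.neg_mem hx.2⟩
  | inv x _ hx =>
    refine ⟨E.inv_mem hx.1, ?_⟩
    rw [D.leibniz_inv, smul_eq_mul, neg_mul]
    exact E.neg_mem (E.mul_mem (E.pow_mem (E.inv_mem hx.1) 2) hx.2)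
  | mul x y _ _ hx hy =>
    refine ⟨E.mul_mem hx.1 hy.1, ?_⟩
    rw [D.leibniz, smul_eq_mul, smul_eq_mul]
    exact E.add_mem (E.mul_mem hx.1 hy.2) (E.mul_mem hy.1 hx.2)

theorem Subfield.aeval_mem {F E : Subfield U} (hFE : F ≤ E) {x : U} (hx : x ∈ E) (p : F[X]) :
    aeval x p ∈ E := by
  rw [aeval_eq_sum_range]
  exact E.sum_mem fun i _ => E.mul_mem (hFE (p.coeff i).2) (E.pow_mem hx i)

theorem Derivation.apply_aeval_sub_mem (D : Derivation R U U) {F E : Subfield U}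
    (hD : Set.MapsTo D F E) {x : U} (hx : x ∈ E) (p : F[X]) :
    D (aeval x p) - aeval x (derivative p) * D x ∈ E := by
  induction p using Polynomial.induction_on' with
  | add p q hp hq =>
    rw [map_add, map_add, derivative_add, map_add, add_mul, add_sub_add_comm]
    exact E.add_mem hp hq
  | monomial n c =>
    have hc : D (algebraMap F U c) ∈ E := hD c.2
    simp only [aeval_monomial, D.leibniz, D.leibniz_pow, smul_eq_mul, nsmul_eq_mul,
      derivative_monomial, map_mul, _root_.map_natCast]
    convert E.mul_mem (E.pow_mem hx n) hc using 1
    ring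

theorem Derivation.apply_mem_of_isAlgebraic [CharZero U] (D : Derivation R U U)
    {F E : Subfield U} (hFE : F ≤ E) (hD : Set.MapsTo D F E) {x : U} (hx : x ∈ E)
    (halg : IsAlgebraic F x) : D x ∈ E := by
  have hroot : aeval x (minpoly F x) = 0 := minpoly.aeval F x
  have hsep : (minpoly F x).Separable := (minpoly.irreducible halg.isIntegral).separable
  have h := D.apply_aeval_sub_mem hD hx (minpoly F x)
  rw [hroot, map_zero, zero_sub, neg_mem_iff] at h
  have := E.mul_mem (E.inv_mem (Subfield.aeval_mem hFE hx (derivative (minpoly F x)))) h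
  rwa [inv_mul_cancel_left₀ (hsep.aeval_derivative_ne_zero hroot)] at this

end Derivation

section DAdjoinSet

variable {U ι : Type*} [Field U] {δ : ι → U → U}

def dAdjoinSet (δ : ι → U → U) (F : Subfield U) (X : Set U) : Subfield U :=
  Subfield.closure (F ∪ ⋃ θ : Theta ι, thetaApply δ θ '' X)

theorem dAdjoin_eq_dAdjoinSet {n : ℕ} (F : Subfield U) (a : Fin n → U) :
    dAdjoin δ F a = dAdjoinSet δ F (Set.range a) := by
  unfold dAdjoin dAdjoinSet
  congr 2
  ext x
  simp only [Set.mem_ofPred_eq, Set.mem_iUnion, Set.mem_image, Set.exists_range_iff]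
  exact ⟨fun ⟨k, θ, h⟩ => ⟨θ, k, h.symm⟩, fun ⟨θ, k, h⟩ => ⟨k, θ, h.symm⟩⟩

theorem le_dAdjoin (F : Subfield U) {n : ℕ} (a : Fin n → U) : F ≤ dAdjoin δ F a :=
  fun _ hx => Subfield.subset_closure (Or.inl hx)

theorem dAdjoin_mono {F F' : Subfield U} (hF : F ≤ F') {n : ℕ} (a : Fin n → U) :
    dAdjoin δ F a ≤ dAdjoin δ F' a :=
  Subfield.closure_mono (Set.union_subset_union_left _ hF)

theorem le_dAdjoinSet (F : Subfield U) (X : Set U) : F ≤ dAdjoinSet δ F X :=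
  fun _ hx => Subfield.subset_closure (Or.inl hx)

theorem closure_union_le_dAdjoinSet (F : Subfield U) (X : Set U) :
    Subfield.closure (F ∪ X) ≤ dAdjoinSet δ F X :=
  Subfield.closure_mono <| Set.union_subset_union_right _ fun x hx =>
    Set.mem_iUnion.mpr ⟨0, x, hx, thetaApply_zero x⟩

theorem subset_dAdjoinSet (F : Subfield U) (X : Set U) : X ⊆ dAdjoinSet δ F X :=
  fun _ hx => closure_union_le_dAdjoinSet F X (Subfield.subset_closure (Or.inr hx))

theorem dAdjoinSet_mono {F F' : Subfield U} {X X' : Set U} (hF : F ≤ F') (hX : X ⊆ X') :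
    dAdjoinSet δ F X ≤ dAdjoinSet δ F' X' :=
  Subfield.closure_mono (Set.union_subset_union hF (Set.iUnion_mono fun _ => Set.image_mono hX))

theorem dAdjoinSet_le {F E : Subfield U} {X : Set U} (hF : F ≤ E) (hX : X ⊆ E)
    (hE : DStable δ E) : dAdjoinSet δ F X ≤ E := by
  rw [dAdjoinSet, Subfield.closure_le]
  refine Set.union_subset hF (Set.iUnion_subset fun θ => ?_)
  rintro _ ⟨x, hx, rfl⟩
  exact thetaApply_mapsTo hE θ (hX hx)

theorem mapsTo_dAdjoinSet {R : Type*} [CommRing R] [Algebra R U] (D : Derivation R U U)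
    (hD : ∀ j, Function.Commute D (δ j))
    {F E : Subfield U} {X : Set U} (hFE : F ≤ E) (hXE : X ⊆ E) (hE : DStable δ E)
    (hDF : Set.MapsTo D F E) (hDX : Set.MapsTo D X E) :
    Set.MapsTo D (dAdjoinSet δ F X) E := by
  refine D.mapsTo_closure (Subfield.subset_closure.trans (dAdjoinSet_le hFE hXE hE))
    (Set.mapsTo_union.mpr ⟨hDF, ?_⟩)
  simp only [Set.MapsTo, Set.mem_iUnion, Set.mem_image]
  rintro _ ⟨θ, x, hx, rfl⟩
  rw [thetaApply_commute hD θ x]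
  exact thetaApply_mapsTo hE θ (hDX hx)

theorem DStable.dAdjoinSet (hδ : IsCommDiff δ) {F : Subfield U} (hF : DStable δ F)
    (X : Set U) : DStable δ (dAdjoinSet δ F X) := by
  intro j
  refine (hδ.derivation j).mapsTo_closure Subfield.subset_closure ?_
  rintro y (hy | hy)
  · exact Subfield.subset_closure (Or.inl (hF j y hy))
  · obtain ⟨θ, x, hx, rfl⟩ : ∃ θ, ∃ x ∈ X, thetaApply δ θ x = y := by
      simpa only [Set.mem_iUnion, Set.mem_image] using hy
    rw [IsCommDiff.coe_derivation, ← thetaApply_single_one (δ := δ), ← thetaApply_add hδ.2.2]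
    exact Subfield.subset_closure (Or.inr (Set.mem_iUnion.mpr ⟨_, x, hx, rfl⟩))

theorem DStable.combination [Fintype ι] {κ : Type*} {c : κ → ι → U} {dDe : κ → U → U}
    {F : Subfield U} (hF : DStable δ F) (hc : ∀ j i, c j i ∈ F)
    (hΔdef : ∀ j x, dDe j x = ∑ i, c j i * δ i x) : DStable dDe F := fun j x hx => by
  rw [hΔdef]
  exact F.sum_mem fun i _ => F.mul_mem (hc j i) (hF i x hx)

theorem DStable.dAdjoin (hδ : IsCommDiff δ) {F : Subfield U} (hF : DStable δ F) {n : ℕ}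
    (a : Fin n → U) : DStable δ (dAdjoin δ F a) := by
  rw [dAdjoin_eq_dAdjoinSet]
  exact hF.dAdjoinSet hδ _

end DAdjoinSet

theorem Subfield.exists_forall_mem_closure_union {U κ : Type*} [Field U] [Finite κ] {S : Set U}
    {T : ℕ → Set U} (hT : Monotone T) {α : κ → U}
    (hα : ∀ k, α k ∈ Subfield.closure (S ∪ ⋃ r, T r)) :
    ∃ r, ∀ k, α k ∈ Subfield.closure (S ∪ T r) := by
  have hmono : Monotone fun r => Subfield.closure (S ∪ T r) := fun r r' h =>
    Subfield.closure_mono (Set.union_subset_union_right _ (hT h))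
  simp_rw [Set.union_iUnion, Subfield.closure_iUnion,
    Subfield.mem_iSup_of_directed hmono.directed_le] at hα
  choose r hr using hα
  obtain ⟨R, hR⟩ := Finite.exists_le r
  exact ⟨R, fun k => hmono (hR k) (hr k)⟩

section Orders

variable {U ι κ : Type*} {δ : ι → U → U} {a : κ → U}

def derivsUpTo (δ : ι → U → U) (a : κ → U) (r : ℕ) : Set U :=
  {y | ∃ k, ∃ θ : Theta ι, θ.degree ≤ r ∧ thetaApply δ θ (a k) = y}

theorem derivsUpTo_mono : Monotone (derivsUpTo δ a) := by
  rintro r r' h _ ⟨k, θ, hθ, rfl⟩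
  exact ⟨k, θ, hθ.trans h, rfl⟩

theorem range_subset_derivsUpTo (r : ℕ) : Set.range a ⊆ derivsUpTo δ a r := by
  rintro _ ⟨k, rfl⟩
  exact ⟨k, 0, by simp, thetaApply_zero _⟩

theorem iUnion_derivsUpTo :
    ⋃ r, derivsUpTo δ a r = {y | ∃ k, ∃ θ : Theta ι, y = thetaApply δ θ (a k)} := by
  ext y
  simp only [Set.mem_iUnion]
  constructor
  · rintro ⟨r, k, θ, -, rfl⟩
    exact ⟨k, θ, rfl⟩
  · rintro ⟨k, θ, rfl⟩
    exact ⟨θ.degree, k, θ, le_rfl, rfl⟩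

theorem derivsUpTo_finite [Finite ι] [Finite κ] (r : ℕ) : (derivsUpTo δ a r).Finite := by
  refine ((Set.finite_univ.prod (Finsupp.finite_of_degree_le r)).image
    fun p : κ × Theta ι => thetaApply δ p.2 (a p.1)).subset ?_
  rintro _ ⟨k, θ, hθ, rfl⟩
  exact ⟨(k, θ), ⟨trivial, hθ⟩, rfl⟩

theorem mapsTo_derivsUpTo_succ (hcomm : ∀ i j x, δ i (δ j x) = δ j (δ i x)) (i : ι) (r : ℕ) :
    Set.MapsTo (δ i) (derivsUpTo δ a r) (derivsUpTo δ a (r + 1)) := by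
  rintro _ ⟨k, θ, hθ, rfl⟩
  refine ⟨k, Finsupp.single i 1 + θ, ?_, by rw [thetaApply_add hcomm, thetaApply_single_one]⟩
  rw [map_add, Finsupp.degree_single]
  omega

theorem derivsUpTo_subset_dAdjoin [Field U] {n : ℕ} {a : Fin n → U} (F : Subfield U) (r : ℕ) :
    derivsUpTo δ a r ⊆ dAdjoin δ F a := by
  rintro _ ⟨k, θ, -, rfl⟩
  exact Subfield.subset_closure (Or.inr ⟨k, θ, rfl⟩)

end Orders

section Bounding

variable {U ι : Type*} [Field U] {n t : ℕ} {δ : ι → U → U} {dDe : Fin t → U → U}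
  {a : Fin n → U}

theorem FinitelyDGen.of_le {K L : Subfield U} (hKL : K ≤ L)
    (hLaΔ : DStable dDe (dAdjoin δ L a)) (h : FinitelyDGen δ dDe K a) :
    FinitelyDGen δ dDe L a := by
  obtain ⟨s, α, hα, hKα⟩ := h
  have hαL : Set.range α ⊆ dAdjoin δ L a := by
    rintro _ ⟨k, rfl⟩
    exact dAdjoin_mono hKL a (hα k)
  refine ⟨s, α, fun k => hαL ⟨k, rfl⟩, le_antisymm ?_ ?_⟩
  · rw [dAdjoin, Subfield.closure_le]
    refine Set.union_subset (le_dAdjoin L α) ?_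
    rintro _ ⟨k, θ, rfl⟩
    have hK : thetaApply δ θ (a k) ∈ dAdjoin dDe K α :=
      hKα ▸ Subfield.subset_closure (Or.inr ⟨k, θ, rfl⟩)
    exact dAdjoin_mono hKL α hK
  · rw [dAdjoin_eq_dAdjoinSet]
    exact dAdjoinSet_le (le_dAdjoin L a) hαL hLaΔ

theorem FinitelyDGen.exists_le_dAdjoinSet_derivsUpTo {L : Subfield U} (hΔ : IsCommDiff dDe)
    (hLΔ : DStable dDe L) (h : FinitelyDGen δ dDe L a) :
    ∃ r, dAdjoin δ L a ≤ dAdjoinSet dDe L (derivsUpTo δ a r) := by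
  obtain ⟨s, α, hα, hLα⟩ := h
  simp_rw [dAdjoin, ← iUnion_derivsUpTo] at hα
  obtain ⟨r, hr⟩ := Subfield.exists_forall_mem_closure_union derivsUpTo_mono hα
  refine ⟨r, hLα ▸ ?_⟩
  rw [dAdjoin_eq_dAdjoinSet]
  refine dAdjoinSet_le (le_dAdjoinSet _ _) ?_ (hLΔ.dAdjoinSet hΔ _)
  rintro _ ⟨k, rfl⟩
  exact closure_union_le_dAdjoinSet _ _ (hr k)

theorem isAlgebraic_dAdjoinSet_of_dAdjoin_le {K L : Subfield U} (hKL : K ≤ L)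
    (hind : ∀ s ⊆ (dAdjoin δ K a : Set U), AlgebraicIndepOn K id s → AlgebraicIndepOn L id s)
    (hKaΔ : DStable dDe (dAdjoin δ K a)) {X : Set U} (hX : X ⊆ dAdjoin δ K a)
    (hLa : dAdjoin δ L a ≤ dAdjoinSet dDe L X) {x : U} (hx : x ∈ dAdjoin δ K a) :
    IsAlgebraic (dAdjoinSet dDe K X) x :=
  isAlgebraic_closure_of_algebraicIndepOn_imp hKL hind
    ((Set.subset_union_right.trans Subfield.subset_closure).trans
      (dAdjoinSet_le (le_dAdjoin K a) hX hKaΔ))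
    hx (hLa (dAdjoin_mono hKL a hx))

theorem dStable_dAdjoinSet_derivsUpTo_succ [CharZero U] (hδ : IsCommDiff δ)
    (hΔ : IsCommDiff dDe) (hcomm : ∀ i j x, δ i (dDe j x) = dDe j (δ i x)) {K : Subfield U}
    (hK : DStable δ K) (hKΔ : DStable dDe K) {r : ℕ}
    (halg : ∀ x ∈ derivsUpTo δ a (r + 1), IsAlgebraic (dAdjoinSet dDe K (derivsUpTo δ a r)) x) :
    DStable δ (dAdjoinSet dDe K (derivsUpTo δ a (r + 1))) := by
  intro i
  set E := dAdjoinSet dDe K (derivsUpTo δ a (r + 1))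
  have hEΔ : DStable dDe E := hKΔ.dAdjoinSet hΔ _
  have hKE : K ≤ E := le_dAdjoinSet _ _
  have hXE : derivsUpTo δ a (r + 1) ⊆ E := subset_dAdjoinSet _ _
  have hD : ∀ j, Function.Commute (hδ.derivation i) (dDe j) := fun j x => hcomm i j x
  have hDK : Set.MapsTo (hδ.derivation i) K E := fun x hx => hKE (hK i x hx)
  have hlow : Set.MapsTo (hδ.derivation i) (dAdjoinSet dDe K (derivsUpTo δ a r)) E :=
    mapsTo_dAdjoinSet _ hD hKE ((derivsUpTo_mono r.le_succ).trans hXE) hEΔ hDK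
      ((mapsTo_derivsUpTo_succ hδ.2.2 i r).mono_right hXE)
  exact mapsTo_dAdjoinSet _ hD hKE hXE hEΔ hDK fun x hx =>
    (hδ.derivation i).apply_mem_of_isAlgebraic
      (dAdjoinSet_mono le_rfl (derivsUpTo_mono r.le_succ)) hlow (hXE hx) (halg x hx)

theorem dAdjoin_eq_dAdjoinSet_of_dStable {K : Subfield U} {X : Set U} (haX : Set.range a ⊆ X)
    (hXa : X ⊆ dAdjoin δ K a) (hKaΔ : DStable dDe (dAdjoin δ K a))
    (hE : DStable δ (dAdjoinSet dDe K X)) : dAdjoin δ K a = dAdjoinSet dDe K X := by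
  refine le_antisymm ?_ (dAdjoinSet_le (le_dAdjoin K a) hXa hKaΔ)
  rw [dAdjoin_eq_dAdjoinSet]
  exact dAdjoinSet_le (le_dAdjoinSet _ _) (haX.trans (subset_dAdjoinSet _ _)) hE

theorem finitelyDGen_of_eq_dAdjoinSet {K : Subfield U} {X : Set U} (hX : X.Finite)
    (hXa : X ⊆ dAdjoin δ K a) (h : dAdjoin δ K a = dAdjoinSet dDe K X) :
    FinitelyDGen δ dDe K a := by
  obtain ⟨s, β, hβ⟩ := hX.fin_embedding
  refine ⟨s, β, fun k => hXa (hβ ▸ ⟨k, rfl⟩), ?_⟩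
  rw [h, dAdjoin_eq_dAdjoinSet, hβ]

end Bounding

theorem bounding_type_independent_of_base_general
    {U : Type} [Field U] [CharZero U] {m n t : ℕ}
    (δ : Fin m → U → U) (hδ : IsCommDiff δ)
    (K L : Subfield U) (hKL : K ≤ L)
    (hKst : DStable δ K) (hLst : DStable δ L)
    (a : Fin n → U)
    -- Δ is given by derivations δΔ j = Σ_i c j i • δ_i with coefficients in K^Π:
    (c : Fin t → Fin m → U)
    (hc : ∀ j i, c j i ∈ K ∧ ∀ i', δ i' (c j i) = 0)
    (dDe : Fin t → U → U)
    (hΔdef : ∀ j x, dDe j x = ∑ i, c j i * δ i x)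
    -- a ⫝_K L : K⟨a⟩_Π is algebraically disjoint from L over K:
    (hind : ∀ (d : ℕ) (x : Fin d → U), (∀ k, x k ∈ dAdjoin δ K a) →
      AlgebraicIndependent K x → AlgebraicIndependent L x) :
    FinitelyDGen δ dDe L a ↔ FinitelyDGen δ dDe K a := by
  have hconst : ∀ j i i', δ i' (c j i) = 0 := fun j i => (hc j i).2
  have hΔ : IsCommDiff dDe := hδ.combination hconst hΔdef
  have hΔst : ∀ F : Subfield U, K ≤ F → DStable δ F → DStable dDe F := fun F hKF hF =>
    hF.combination (fun j i => hKF (hc j i).1) hΔdef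
  have hKa : ∀ r, derivsUpTo δ a r ⊆ dAdjoin δ K a := derivsUpTo_subset_dAdjoin K
  have hKaΔ := hΔst _ (le_dAdjoin K a) (hKst.dAdjoin hδ a)
  constructor
  · intro hL
    obtain ⟨r, hr⟩ := hL.exists_le_dAdjoinSet_derivsUpTo hΔ (hΔst L hKL hLst)
    have halg : ∀ x ∈ derivsUpTo δ a (r + 1),
        IsAlgebraic (dAdjoinSet dDe K (derivsUpTo δ a r)) x := fun x hx =>
      isAlgebraic_dAdjoinSet_of_dAdjoin_le hKL (fun s => AlgebraicIndepOn.of_forall_fin hind)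
        hKaΔ (hKa r) hr (hKa _ hx)
    refine finitelyDGen_of_eq_dAdjoinSet (derivsUpTo_finite (r + 1)) (hKa _)
      (dAdjoin_eq_dAdjoinSet_of_dStable (range_subset_derivsUpTo _) (hKa _) hKaΔ ?_)
    exact dStable_dAdjoinSet_derivsUpTo_succ hδ hΔ (hδ.commute_combination hconst hΔdef) hKst
      (hΔst K le_rfl hKst) halg
  · exact FinitelyDGen.of_le hKL (hΔst _ (hKL.trans (le_dAdjoin L a)) (hLst.dAdjoin hδ a))

/-- Let `a` be a finite tuple in a (saturated model of `DCF_{0,m}`)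
differential field `U` with commuting derivations `Π = {δ_1,…,δ_m}`, `K ≤ L`
differential subfields with `a` independent from `L` over `K` (i.e. `K⟨a⟩_Π` is
algebraically disjoint from `L` over `K`), and let `Δ` be a `K^Π`-linearly
independent set of elements of the `K^Π`-span of `Π`.  Then `L⟨a⟩_Π` is finitely
`Δ`-generated over `L` if and only if `K⟨a⟩_Π` is finitely `Δ`-generated over `K`. -/
theorem bounding_type_independent_of_base
    {U : Type} [Field U] [CharZero U] {m n t : ℕ}
    (δ : Fin m → U → U) (hδ : IsCommDiff δ)
    (K L : Subfield U) (hKL : K ≤ L)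
    (hKst : DStable δ K) (hLst : DStable δ L)
    (a : Fin n → U)
    -- Δ is given by derivations δΔ j = Σ_i c j i • δ_i with coefficients in K^Π:
    (c : Fin t → Fin m → U)
    (hc : ∀ j i, c j i ∈ K ∧ ∀ i', δ i' (c j i) = 0)
    (dDe : Fin t → U → U)
    (hΔdef : ∀ j x, dDe j x = ∑ i, c j i * δ i x)
    -- Δ is linearly independent over K^Π:
    (hΔind : ∀ d : Fin t → U, (∀ j, d j ∈ K ∧ ∀ i', δ i' (d j) = 0) →
      (∀ x : U, ∑ j, d j * dDe j x = 0) → ∀ j, d j = 0)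
    -- a ⫝_K L : K⟨a⟩_Π is algebraically disjoint from L over K:
    (hind : ∀ (d : ℕ) (x : Fin d → U), (∀ k, x k ∈ dAdjoin δ K a) →
      AlgebraicIndependent K x → AlgebraicIndependent L x) :
    FinitelyDGen δ dDe L a ↔ FinitelyDGen δ dDe K a :=
  bounding_type_independent_of_base_general δ hδ K L hKL hKst hLst a c hc dDe hΔdef hind
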